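/- Let G' be the Type C Whitney flip of a simple graph G along (H, v0, v1, v2, e). Then G' has the same vertex set as G, the same number of edges as G, and G' is connected if and only if G is connected. Consequently, when G is connected, the Betti numbers e − v + 1 of G and G' (where e is the number of edges and v the number of vertices) are equal. -/

import Mathlib

/-! The flip only rewires edges inside `insert v2 H`. On edges it trades `s(v0, v2)` for
`s(v0, v1)`, maps the edges of `G - e` inside `H` injectively by `rhoC` (which avoids `v1`), and
keeps the others; an image edge is never a kept edge because no edge of `G - e` leaves `H` from
`H \ {v1}`. For connectivity, `insert v2 H` is connected in both graphs: in `G` through `G - e`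
on `H` and the edge `e`, in the flip through the `rhoC`-image of `G - e` on `H` and the new edge
`s(v0, v1)`. Every edge of either graph either lies in `insert v2 H` or is an edge of the other,
so the two graphs have the same reachability relation. -/

open SimpleGraph

/-- The vertex map of the Type C Whitney flip: `v0 ↦ v2`, `v1 ↦ v0`, all other vertices
fixed. -/
def rhoC {V : Type*} [DecidableEq V] (v0 v1 v2 : V) (x : V) : V :=
  if x = v0 then v2 else if x = v1 then v0 else x

lemma rhoC_injOn {V : Type*} [DecidableEq V] {v0 v1 v2 : V} {H : Set V}
    (h02 : v0 ≠ v2) (hv2 : v2 ∉ H) : Set.InjOn (rhoC v0 v1 v2) H := by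
  intro x hx y hy hxy
  unfold rhoC at hxy
  split_ifs at hxy <;> simp_all

/-- The Type C Whitney flip of `G` along `(H, v0, v1, v2, e)` where `e = s(v0, v2)`:
its edges are the edge `{v0, v1}`, the images under `rhoC v0 v1 v2` of the edges of
`G - e` with both endpoints in `H`, and the edges of `G - e` not having both endpoints
in `H`. -/
def typeCFlip {V : Type*} [DecidableEq V] (G : SimpleGraph V) (v0 v1 v2 : V) (H : Set V)
    (h01 : v0 ≠ v1) (h02 : v0 ≠ v2) (hv2 : v2 ∉ H) : SimpleGraph V where
  Adj a b :=
    s(a, b) = s(v0, v1) ∨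
    (∃ x y : V, x ∈ H ∧ y ∈ H ∧ (G.deleteEdges {s(v0, v2)}).Adj x y ∧
      a = rhoC v0 v1 v2 x ∧ b = rhoC v0 v1 v2 y) ∨
    (¬(a ∈ H ∧ b ∈ H) ∧ (G.deleteEdges {s(v0, v2)}).Adj a b)
  symm := by
    constructor
    rintro a b (he | ⟨x, y, hx, hy, h, ha, hb⟩ | ⟨hn, h⟩)
    · exact Or.inl (Sym2.eq_swap.trans he)
    · exact Or.inr (Or.inl ⟨y, x, hy, hx, h.symm, hb, ha⟩)
    · exact Or.inr (Or.inr ⟨fun ⟨hb', ha'⟩ => hn ⟨ha', hb'⟩, h.symm⟩)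
  loopless := by
    constructor
    rintro a (he | ⟨x, y, hx, hy, h, ha, hb⟩ | ⟨_, h⟩)
    · rw [Sym2.eq_iff] at he
      rcases he with ⟨h1, h2⟩ | ⟨h1, h2⟩ <;> exact h01 (h1 ▸ h2 ▸ rfl)
    · exact h.ne (rhoC_injOn h02 hv2 hx hy (ha ▸ hb))
    · exact h.ne rfl
namespace Set

theorem InjOn.sym2_map {α β : Type*} {f : α → β} {s : Set α} (hf : InjOn f s) :
    InjOn (Sym2.map f) s.sym2 := by
  rintro ⟨a, b⟩ ⟨ha, hb⟩ ⟨c, d⟩ ⟨hc, hd⟩ h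
  rw [Sym2.map_mk, Sym2.map_mk, Sym2.eq_iff] at h
  rw [Sym2.eq_iff]
  rcases h with ⟨hac, hbd⟩ | ⟨had, hbc⟩
  · exact Or.inl ⟨hf ha hc hac, hf hb hd hbd⟩
  · exact Or.inr ⟨hf ha hd had, hf hb hc hbc⟩

end Set

namespace SimpleGraph

variable {V : Type*}

theorem Reachable.of_adj_or_mem {G G' : SimpleGraph V} {S : Set V}
    (hS : ∀ x ∈ S, ∀ y ∈ S, G'.Reachable x y)
    (hadj : ∀ {a b}, G.Adj a b → (a ∈ S ∧ b ∈ S) ∨ G'.Adj a b) {a b : V}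
    (h : G.Reachable a b) : G'.Reachable a b := by
  obtain ⟨w⟩ := h
  induction w with
  | nil => rfl
  | cons h _ ih =>
    rcases hadj h with ⟨ha, hb⟩ | h'
    · exact (hS _ ha _ hb).trans ih
    · exact h'.reachable.trans ih

theorem Connected.of_adj_or_mem {G G' : SimpleGraph V} {S : Set V}
    (hS : ∀ x ∈ S, ∀ y ∈ S, G'.Reachable x y)
    (hadj : ∀ {a b}, G.Adj a b → (a ∈ S ∧ b ∈ S) ∨ G'.Adj a b) (hG : G.Connected) :
    G'.Connected :=
  { preconnected := fun a b => (hG a b).of_adj_or_mem hS hadj, nonempty := hG.nonempty }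

section TypeCFlip

variable {G : SimpleGraph V} {v0 v1 v2 : V} {H : Set V}

theorem reachable_of_mem_insert_of_induce_connected (he : G.Adj v0 v2) (h0 : v0 ∈ H)
    (hHconn : ((G.deleteEdges {s(v0, v2)}).induce H).Connected) {x : V}
    (hx : x ∈ insert v2 H) : G.Reachable x v0 := by
  rcases hx with rfl | hx
  · exact he.symm.reachable
  · exact ((hHconn.preconnected ⟨x, hx⟩ ⟨v0, h0⟩).map (Embedding.induce H).toHom).mono
      (deleteEdges_le _)

variable [DecidableEq V]

theorem rhoC_ne_middle (h01 : v0 ≠ v1) (h12 : v1 ≠ v2) (x : V) : rhoC v0 v1 v2 x ≠ v1 := by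
  unfold rhoC
  split_ifs with _ hx1
  exacts [h12.symm, h01, hx1]

theorem rhoC_mem_insert (h0 : v0 ∈ H) {x : V} (hx : x ∈ H) :
    rhoC v0 v1 v2 x ∈ insert v2 H := by
  unfold rhoC
  split_ifs <;> simp_all

theorem typeCFlip_adj_rhoC (h01 : v0 ≠ v1) (h02 : v0 ≠ v2) (hv2 : v2 ∉ H) {x y : V}
    (hx : x ∈ H) (hy : y ∈ H) (hxy : (G.deleteEdges {s(v0, v2)}).Adj x y) :
    (typeCFlip G v0 v1 v2 H h01 h02 hv2).Adj (rhoC v0 v1 v2 x) (rhoC v0 v1 v2 y) :=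
  Or.inr (Or.inl ⟨x, y, hx, hy, hxy, rfl, rfl⟩)

theorem typeCFlip_edgeSet (h01 : v0 ≠ v1) (h02 : v0 ≠ v2) (hv2 : v2 ∉ H) :
    (typeCFlip G v0 v1 v2 H h01 h02 hv2).edgeSet =
      insert s(v0, v1) (Sym2.map (rhoC v0 v1 v2) ''
          ((G.deleteEdges {s(v0, v2)}).edgeSet ∩ H.sym2) ∪
        (G.deleteEdges {s(v0, v2)}).edgeSet \ H.sym2) := by
  ext ⟨a, b⟩
  simp only [mem_edgeSet, Set.mem_insert_iff, Set.mem_union, Set.mem_image, Set.mem_inter_iff,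
    Set.mem_sdiff, Set.mk_mem_sym2_iff]
  refine or_congr Iff.rfl (or_congr ⟨?_, ?_⟩ and_comm)
  · rintro ⟨x, y, hx, hy, hxy, rfl, rfl⟩
    exact ⟨s(x, y), ⟨hxy, hx, hy⟩, rfl⟩
  · rintro ⟨⟨x, y⟩, ⟨hxy, hx, hy⟩, h⟩
    rw [Sym2.map_mk, Sym2.eq_iff] at h
    rcases h with ⟨rfl, rfl⟩ | ⟨rfl, rfl⟩
    exacts [⟨x, y, hx, hy, hxy, rfl, rfl⟩, ⟨y, x, hy, hx, hxy.symm, rfl, rfl⟩]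

theorem disjoint_image_rhoC_sdiff_sym2 {K : SimpleGraph V} (h01 : v0 ≠ v1) (h12 : v1 ≠ v2)
    (h0 : v0 ∈ H) (hHedge : ∀ x y : V, K.Adj x y → x ∈ H \ ({v1} : Set V) → y ∈ H) :
    Disjoint (Sym2.map (rhoC v0 v1 v2) '' (K.edgeSet ∩ H.sym2)) (K.edgeSet \ H.sym2) := by
  rw [Set.disjoint_left]
  rintro _ ⟨⟨x, y⟩, ⟨-, hx, hy⟩, rfl⟩ ⟨hadj, hnot⟩
  rw [Sym2.map_mk, mem_edgeSet] at hadj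
  rw [Sym2.map_mk, Set.mk_mem_sym2_iff] at hnot
  have hx' := rhoC_mem_insert (v1 := v1) (v2 := v2) h0 hx
  have hy' := rhoC_mem_insert (v1 := v1) (v2 := v2) h0 hy
  have hin : rhoC v0 v1 v2 x ∈ H \ {v1} ∨ rhoC v0 v1 v2 y ∈ H \ {v1} := by
    rcases hx' with hx' | hx'
    · rcases hy' with hy' | hy'
      · exact (hadj.ne (hx'.trans hy'.symm)).elim
      · exact Or.inr ⟨hy', rhoC_ne_middle h01 h12 y⟩
    · exact Or.inl ⟨hx', rhoC_ne_middle h01 h12 x⟩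
  rcases hin with hx'' | hy''
  · exact hnot ⟨hx''.1, hHedge _ _ hadj hx''⟩
  · exact hnot ⟨hHedge _ _ hadj.symm hy'', hy''.1⟩

theorem ncard_edgeSet_typeCFlip [Finite V] (h01 : v0 ≠ v1) (h02 : v0 ≠ v2) (h12 : v1 ≠ v2)
    (he : G.Adj v0 v2) (h0 : v0 ∈ H) (h1 : v1 ∈ H) (hv2 : v2 ∉ H)
    (hHedge : ∀ x y : V, (G.deleteEdges {s(v0, v2)}).Adj x y →
      x ∈ H \ ({v1} : Set V) → y ∈ H) :
    (typeCFlip G v0 v1 v2 H h01 h02 hv2).edgeSet.ncard = G.edgeSet.ncard := by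
  have hnew : s(v0, v1) ∉ Sym2.map (rhoC v0 v1 v2) ''
      ((G.deleteEdges {s(v0, v2)}).edgeSet ∩ H.sym2) ∪
        (G.deleteEdges {s(v0, v2)}).edgeSet \ H.sym2 := by
    rintro (⟨⟨x, y⟩, -, h⟩ | ⟨-, hH⟩)
    · rw [Sym2.map_mk, Sym2.eq_iff] at h
      obtain ⟨-, h⟩ | ⟨h, -⟩ := h
      exacts [rhoC_ne_middle h01 h12 y h, rhoC_ne_middle h01 h12 x h]
    · exact hH ⟨h0, h1⟩
  rw [typeCFlip_edgeSet, Set.ncard_insert_of_notMem hnew,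
    Set.ncard_union_eq (disjoint_image_rhoC_sdiff_sym2 h01 h12 h0 hHedge),
    ((rhoC_injOn h02 hv2).sym2_map.mono Set.inter_subset_right).ncard_image,
    Set.ncard_inter_add_ncard_sdiff_eq_ncard, edgeSet_deleteEdges,
    Set.ncard_sdiff_singleton_add_one (G.mem_edgeSet.mpr he)]

theorem typeCFlip_reachable_of_mem_insert (h01 : v0 ≠ v1) (h02 : v0 ≠ v2) (h0 : v0 ∈ H)
    (h1 : v1 ∈ H) (hv2 : v2 ∉ H) (hHconn : ((G.deleteEdges {s(v0, v2)}).induce H).Connected)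
    {x : V} (hx : x ∈ insert v2 H) : (typeCFlip G v0 v1 v2 H h01 h02 hv2).Reachable x v0 := by
  have hρ : ∀ y ∈ H, ∀ z ∈ H, (typeCFlip G v0 v1 v2 H h01 h02 hv2).Reachable
      (rhoC v0 v1 v2 y) (rhoC v0 v1 v2 z) := fun y hy z hz =>
    (hHconn.preconnected ⟨y, hy⟩ ⟨z, hz⟩).map
      (⟨fun a => rhoC v0 v1 v2 a, fun {a b} hab => typeCFlip_adj_rhoC h01 h02 hv2 a.2 b.2 hab⟩ :
        (G.deleteEdges {s(v0, v2)}).induce H →g typeCFlip G v0 v1 v2 H h01 h02 hv2)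
  rcases hx with rfl | hx
  · simpa [rhoC, h01.symm] using hρ v0 h0 v1 h1
  by_cases hx1 : x = v1
  · subst hx1
    exact Adj.reachable (Or.inl Sym2.eq_swap)
  by_cases hx0 : x = v0
  · subst hx0
    rfl
  simpa [rhoC, hx0, hx1, h01.symm] using hρ x hx v1 h1

theorem mem_insert_or_typeCFlip_adj_of_adj (h01 : v0 ≠ v1) (h02 : v0 ≠ v2) (h0 : v0 ∈ H)
    (hv2 : v2 ∉ H) {a b : V} (h : G.Adj a b) :
    (a ∈ insert v2 H ∧ b ∈ insert v2 H) ∨ (typeCFlip G v0 v1 v2 H h01 h02 hv2).Adj a b := by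
  by_cases hab : s(a, b) = s(v0, v2)
  · left
    rcases Sym2.eq_iff.mp hab with ⟨rfl, rfl⟩ | ⟨rfl, rfl⟩ <;> simp [h0]
  by_cases hH : a ∈ H ∧ b ∈ H
  · exact Or.inl ⟨Or.inr hH.1, Or.inr hH.2⟩
  · exact Or.inr (Or.inr (Or.inr ⟨hH, deleteEdges_adj.mpr ⟨h, by simpa using hab⟩⟩))

theorem mem_insert_or_adj_of_typeCFlip_adj (h01 : v0 ≠ v1) (h02 : v0 ≠ v2) (h0 : v0 ∈ H)
    (h1 : v1 ∈ H) (hv2 : v2 ∉ H) {a b : V} (h : (typeCFlip G v0 v1 v2 H h01 h02 hv2).Adj a b) :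
    (a ∈ insert v2 H ∧ b ∈ insert v2 H) ∨ G.Adj a b := by
  rcases h with h | ⟨x, y, hx, hy, -, rfl, rfl⟩ | ⟨-, h⟩
  · left
    rcases Sym2.eq_iff.mp h with ⟨rfl, rfl⟩ | ⟨rfl, rfl⟩ <;> simp [h0, h1]
  · exact Or.inl ⟨rhoC_mem_insert h0 hx, rhoC_mem_insert h0 hy⟩
  · exact Or.inr (deleteEdges_le _ h)

theorem typeCFlip_connected_iff (h01 : v0 ≠ v1) (h02 : v0 ≠ v2) (he : G.Adj v0 v2)
    (h0 : v0 ∈ H) (h1 : v1 ∈ H) (hv2 : v2 ∉ H)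
    (hHconn : ((G.deleteEdges {s(v0, v2)}).induce H).Connected) :
    (typeCFlip G v0 v1 v2 H h01 h02 hv2).Connected ↔ G.Connected := by
  have hG : ∀ x ∈ insert v2 H, ∀ y ∈ insert v2 H, G.Reachable x y := fun x hx y hy =>
    (reachable_of_mem_insert_of_induce_connected he h0 hHconn hx).trans
      (reachable_of_mem_insert_of_induce_connected he h0 hHconn hy).symm
  have hG' : ∀ x ∈ insert v2 H, ∀ y ∈ insert v2 H,
      (typeCFlip G v0 v1 v2 H h01 h02 hv2).Reachable x y := fun x hx y hy =>
    (typeCFlip_reachable_of_mem_insert h01 h02 h0 h1 hv2 hHconn hx).trans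
      (typeCFlip_reachable_of_mem_insert h01 h02 h0 h1 hv2 hHconn hy).symm
  exact ⟨Connected.of_adj_or_mem hG (mem_insert_or_adj_of_typeCFlip_adj h01 h02 h0 h1 hv2),
    Connected.of_adj_or_mem hG' (mem_insert_or_typeCFlip_adj_of_adj h01 h02 h0 hv2)⟩

end TypeCFlip

end SimpleGraph

/-- the Type C Whitney flip has the same vertex set (both graphs live on
`V`), the same number of edges, preserves connectedness, and hence preserves the Betti
number `e - v + 1` of a connected graph. -/
theorem typeCFlip_edgeCount_connected_betti {V : Type*} [Fintype V] [DecidableEq V]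
    (G : SimpleGraph V) (v0 v1 v2 : V) (h01 : v0 ≠ v1) (h02 : v0 ≠ v2) (h12 : v1 ≠ v2)
    (he : G.Adj v0 v2) (H : Set V) (h0 : v0 ∈ H) (h1 : v1 ∈ H) (hv2 : v2 ∉ H)
    (hHconn : ((G.deleteEdges {s(v0, v2)}).induce H).Connected)
    (hHedge : ∀ x y : V, (G.deleteEdges {s(v0, v2)}).Adj x y →
      x ∈ H \ ({v1} : Set V) → y ∈ H) :
    (typeCFlip G v0 v1 v2 H h01 h02 hv2).edgeSet.ncard = G.edgeSet.ncard ∧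
      ((typeCFlip G v0 v1 v2 H h01 h02 hv2).Connected ↔ G.Connected) ∧
      (G.Connected →
        ((typeCFlip G v0 v1 v2 H h01 h02 hv2).edgeSet.ncard : ℤ) - Fintype.card V + 1 =
          (G.edgeSet.ncard : ℤ) - Fintype.card V + 1) := by
  have hcard := ncard_edgeSet_typeCFlip h01 h02 h12 he h0 h1 hv2 hHedge
  exact ⟨hcard, typeCFlip_connected_iff h01 h02 he h0 h1 hv2 hHconn, fun _ => by rw [hcard]⟩
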